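/- arXiv:2601.08656 — 4 statements merged into one kernel-verified Lean document; each statement's English description precedes it below -/
import Mathlib

section
/- If Λ = (1/√ε) · artanh(1 - ε/2) and U solves U' + U² + K = 0 on [0, Λ] with K ≤ -ε and U(0) ≥ 0, then U(Λ) ≥ √ε(1 - ε/2). -/
/-!
The function `V t = √ε tanh (√ε t)` solves the Riccati equation `V' + V² - ε = 0` with `V 0 = 0`.
Since `K ≤ -ε`, `U` is a supersolution of that equation, and the difference `W = U - V` satisfies
the linear inequality `W' ≥ -(U + V) W`. With the integrating factor `exp (∫ (U + V))` this makes
`W` keep its sign, so `U Λ ≥ V Λ = √ε tanh (artanh (1 - ε/2)) = √ε (1 - ε/2)`.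
-/

open Set

/-- The inverse hyperbolic tangent. -/
noncomputable def artanh (x : ℝ) : ℝ := (1 / 2) * Real.log ((1 + x) / (1 - x))

section

open Real

theorem Real.hasDerivAt_tanh (x : ℝ) : HasDerivAt tanh (1 - tanh x ^ 2) x := by
  have hcosh : cosh x ≠ 0 := (cosh_pos x).ne'
  have hderiv := (hasDerivAt_sinh x).div (hasDerivAt_cosh x) hcosh
  rw [show sinh / cosh = tanh from funext fun y => (tanh_eq_sinh_div_cosh y).symm] at hderiv
  refine hderiv.congr_deriv ?_
  rw [tanh_eq_sinh_div_cosh]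
  field_simp

theorem hasDerivAt_mul_tanh_mul (a t : ℝ) :
    HasDerivAt (fun s => a * tanh (a * s)) (a ^ 2 - (a * tanh (a * t)) ^ 2) t := by
  have hinner : HasDerivAt (fun s => a * s) a t := by
    simpa using (hasDerivAt_id t).const_mul a
  refine (((hasDerivAt_tanh (a * t)).comp t hinner).const_mul a).congr_deriv ?_
  ring

/-- Integrating factor: `t ↦ W t * exp (∫ s in a..t, c s)` is monotone. -/
theorem nonneg_of_hasDerivAt_ge_neg_mul {W W' c : ℝ → ℝ} {a b : ℝ} (hab : a ≤ b)
    (hW : ContinuousOn W (Icc a b)) (hc : ContinuousOn c (Icc a b))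
    (hW' : ∀ t ∈ Ioo a b, HasDerivAt W (W' t) t)
    (hle : ∀ t ∈ Ioo a b, -(c t * W t) ≤ W' t) (ha : 0 ≤ W a) : 0 ≤ W b := by
  set F : ℝ → ℝ := fun t => ∫ s in a..t, c s
  have hF : ContinuousOn F (Icc a b) := by
    simpa [uIcc_of_le hab] using
      intervalIntegral.continuousOn_primitive_interval (μ := MeasureTheory.volume)
        (hc.integrableOn_Icc.mono_set (uIcc_of_le hab).subset)
  have hF' : ∀ t ∈ Ioo a b, HasDerivAt F (c t) t := fun t ht =>
    intervalIntegral.integral_hasDerivAt_right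
      ((hc.mono (Icc_subset_Icc_right ht.2.le)).intervalIntegrable_of_Icc ht.1.le)
      ((hc.mono Ioo_subset_Icc_self).stronglyMeasurableAtFilter isOpen_Ioo t ht)
      (hc.continuousAt (Icc_mem_nhds ht.1 ht.2))
  have hmono : MonotoneOn (fun t => W t * exp (F t)) (Icc a b) := by
    refine monotoneOn_of_hasDerivWithinAt_nonneg (f' := fun t => (W' t + c t * W t) * exp (F t))
      (convex_Icc a b) (hW.mul (continuous_exp.comp_continuousOn hF)) (fun t ht => ?_)
      (fun t ht => ?_) <;> rw [interior_Icc] at ht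
    · refine ((hW' t ht).mul ((hF' t ht).exp)).hasDerivWithinAt.congr_deriv ?_
      ring
    · exact mul_nonneg (by linarith [hle t ht]) (exp_pos _).le
  have hb := hmono (left_mem_Icc.2 hab) (right_mem_Icc.2 hab) hab
  exact (mul_nonneg_iff_of_pos_right (exp_pos _)).1 ((mul_nonneg ha (exp_pos _).le).trans hb)

theorem riccati_comparison {U V K L : ℝ → ℝ} {a b : ℝ} (hab : a ≤ b)
    (hU : ∀ t ∈ Icc a b, HasDerivAt U (-(U t) ^ 2 - K t) t)
    (hV : ∀ t ∈ Icc a b, HasDerivAt V (-(V t) ^ 2 - L t) t)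
    (hKL : ∀ t ∈ Ioo a b, K t ≤ L t) (ha : V a ≤ U a) : V b ≤ U b := by
  have hUc : ContinuousOn U (Icc a b) := fun t ht => (hU t ht).continuousAt.continuousWithinAt
  have hVc : ContinuousOn V (Icc a b) := fun t ht => (hV t ht).continuousAt.continuousWithinAt
  refine sub_nonneg.1 (nonneg_of_hasDerivAt_ge_neg_mul (W := fun t => U t - V t)
    (c := fun t => U t + V t) hab (hUc.sub hVc) (hUc.add hVc)
    (fun t ht => (hU t (Ioo_subset_Icc_self ht)).sub (hV t (Ioo_subset_Icc_self ht)))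
    (fun t ht => ?_) (show 0 ≤ U a - V a from sub_nonneg.2 ha))
  linarith [hKL t ht]

end

theorem stmt_8_general (ε : ℝ) (hε0 : 0 < ε) (hε1 : ε < 1)
    (Λ : ℝ) (hΛ : Λ = (1 / Real.sqrt ε) * artanh (1 - ε / 2))
    (K U : ℝ → ℝ)
    (hK : ∀ t ∈ Icc 0 Λ, K t ≤ -ε)
    (hU : ∀ t ∈ Icc 0 Λ, HasDerivAt U (-(U t) ^ 2 - K t) t)
    (hU0 : 0 ≤ U 0) :
    Real.sqrt ε * (1 - ε / 2) ≤ U Λ := by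
  have hx : 1 - ε / 2 ∈ Ioo (-1) 1 := ⟨by linarith, by linarith⟩
  have hsqrt : 0 < √ε := Real.sqrt_pos.2 hε0
  have hΛ' : √ε * Λ = Real.artanh (1 - ε / 2) := by
    rw [hΛ, _root_.artanh, ← Real.artanh_eq_half_log (Ioo_subset_Icc_self hx)]
    field_simp
  have hΛ0 : 0 ≤ Λ := by
    refine nonneg_of_mul_nonneg_right ?_ hsqrt
    rw [hΛ', ← Real.artanh_zero, Real.artanh_le_artanh_iff (by norm_num) hx]
    linarith
  have hcomp := riccati_comparison (V := fun t => √ε * Real.tanh (√ε * t)) (L := fun _ => -ε)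
    hΛ0 hU
    (fun t _ => by
      convert hasDerivAt_mul_tanh_mul √ε t using 1
      rw [Real.sq_sqrt hε0.le]
      ring)
    (fun t ht => hK t (Ioo_subset_Icc_self ht)) (by simpa using hU0)
  simpa [hΛ', Real.tanh_artanh hx] using hcomp

/-- If `Λ = (1/√ε) artanh(1 - ε/2)` and `U` solves `U' + U² + K = 0` on `[0,Λ]`
with `K ≤ -ε` and `U 0 ≥ 0`, then `U Λ ≥ √ε (1 - ε/2)`. -/
theorem stmt_8 (ε : ℝ) (hε0 : 0 < ε) (hε1 : ε < 1)
    (Λ : ℝ) (hΛ : Λ = (1 / Real.sqrt ε) * artanh (1 - ε / 2))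
    (K U : ℝ → ℝ)
    (hKcont : ContinuousOn K (Icc 0 Λ))
    (hK : ∀ t ∈ Icc 0 Λ, K t ≤ -ε)
    (hU : ∀ t ∈ Icc 0 Λ, HasDerivAt U (-(U t) ^ 2 - K t) t)
    (hU0 : 0 ≤ U 0) :
    Real.sqrt ε * (1 - ε / 2) ≤ U Λ :=
  stmt_8_general ε hε0 hε1 Λ hΛ K U hK hU hU0
end

section
/- Let (M,g) be a compact surface of genus > 1, ε < -2πχ(M)/vol(M), and let w solve Δ_g w = -(K_g - 2πχ(M)/vol(M)) with min_M w = 0. Set g_ρ = e^{2ρw}g for ρ ∈ [0,1] and μ = max_M w. Then at every point x with K_g(x) < -ε, the curvature of g_ρ satisfies K_ρ(x) < -e^{-2μ}ε for all ρ ∈ [0,1]. -/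
/- Conformal deformation `g_ρ = e^{2ρw} g` with `Δ_g w = -(K_g - 2πχ(M)/vol(M))`.
Here `c` denotes the constant `2πχ(M)/vol(M)` (negative for genus > 1), and
by the conformal curvature formula and the equation for `w`,
`K_ρ(x) = e^{-2ρ w(x)} ((1-ρ) K(x) + ρ c)`.  The hypothesis `ε < -2πχ/vol`
reads `ε < -c`, and `0 = min w ≤ w ≤ max w = μ`. -/
theorem stmt_12 (M : Type*) (K w : M → ℝ) (ε μ c : ℝ)
    (hε : 0 < ε) (hεc : ε < -c)
    (hw0 : ∀ x, 0 ≤ w x) (hwμ : ∀ x, w x ≤ μ) :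
    ∀ ρ ∈ Set.Icc (0 : ℝ) 1, ∀ x, K x < -ε →
      Real.exp (-2 * ρ * w x) * ((1 - ρ) * K x + ρ * c) <
        -(Real.exp (-2 * μ) * ε) := by
  rintro ρ ⟨hρ0, hρ1⟩ x hK
  have hA : (1 - ρ) * K x + ρ * c < -ε := by
    rcases hρ0.eq_or_lt with h | h
    · simp [← h]; linarith
    · nlinarith [mul_nonneg (by linarith : (0:ℝ) ≤ 1-ρ) (by linarith : (0:ℝ) ≤ -ε - K x),
        mul_pos h (by linarith : (0:ℝ) < -ε - c)]
  have h1 : -2 * μ ≤ -2 * ρ * w x := by nlinarith [hw0 x, hwμ x]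
  have h2 : Real.exp (-2*μ) ≤ Real.exp (-2 * ρ * w x) := Real.exp_le_exp.mpr h1
  have h3 : (0:ℝ) < Real.exp (-2 * ρ * w x) := Real.exp_pos _
  nlinarith [Real.exp_pos (-2*μ)]
end

section
/- Let f : [0,ℓ] → ℝ solve the scalar Jacobi equation f'' + K(t)f = 0 with K(t) ≤ K⁺ for all t, where K⁺ > 0, f(0) = 0, f'(0) > 0. Then f is strictly increasing on [0, π/(2√K⁺)) ∩ [0,ℓ]; i.e., f'(t) > 0 for all t in that interval. -/
open Set Real

/-!
Put `c = √K⁺` and compare `f` with the solution `sin (c t)` of the constant-curvature equation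
through their Wronskian `W = f' sin (c t) - f · c cos (c t)`, whose derivative is
`(K⁺ - K) f sin (c t)`. If `f'` failed to stay positive before `π / (2c)`, let `t₀` be the first
point where `f' ≤ 0`. On `[0, t₀]` the function `f` is increasing, hence nonnegative, and
`sin (c t) ≥ 0`, so `W` is nondecreasing and `W t₀ ≥ W 0 = 0`. But
`W t₀ ≤ -f t₀ · c cos (c t₀) < 0` since `f t₀ > 0` and `c t₀ < π / 2`. This is the Riccati
comparison `f' / f ≥ c cot (c t)` in integrated form.
-/

noncomputable def sinWronskian (c : ℝ) (f f' : ℝ → ℝ) (u : ℝ) : ℝ :=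
  f' u * sin (c * u) - f u * (c * cos (c * u))

lemma exists_first_nonpos_of_continuousOn {g : ℝ → ℝ} {a b : ℝ} (hab : a ≤ b)
    (hg : ContinuousOn g (Icc a b)) (ha : 0 < g a) (hb : g b ≤ 0) :
    ∃ c ∈ Ioc a b, g c ≤ 0 ∧ ∀ u ∈ Ico a c, 0 < g u := by
  set S := Icc a b ∩ g ⁻¹' Iic 0
  have hS : IsClosed S := hg.preimage_isClosed_of_isClosed isClosed_Icc isClosed_Iic
  obtain ⟨⟨⟨hac, hcb⟩, hc⟩, hmin⟩ :=
    hS.isLeast_csInf ⟨b, right_mem_Icc.2 hab, hb⟩ ⟨a, fun u hu => hu.1.1⟩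
  refine ⟨sInf S, ⟨hac.lt_of_ne ?_, hcb⟩, hc, fun u hu => ?_⟩
  · intro h
    exact (h ▸ hc).not_gt ha
  · by_contra! hu'
    exact hu.2.not_ge (hmin ⟨⟨hu.1, hu.2.le.trans hcb⟩, hu'⟩)

lemma hasDerivAt_sinWronskian {c k u : ℝ} {f f' : ℝ → ℝ}
    (hf : HasDerivAt f (f' u) u) (hf' : HasDerivAt f' (-k * f u) u) :
    HasDerivAt (sinWronskian c f f') ((c ^ 2 - k) * (f u * sin (c * u))) u := by
  have hlin : HasDerivAt (fun x => c * x) c u := by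
    simpa using (hasDerivAt_id u).const_mul c
  have hsin := (hasDerivAt_sin (c * u)).comp u hlin
  have hcos := ((hasDerivAt_cos (c * u)).comp u hlin).const_mul c
  exact ((hf'.mul hsin).sub (hf.mul hcos)).congr_deriv (by simp only [Function.comp_apply]; ring)

lemma sinWronskian_nonneg {c T : ℝ} {K f f' : ℝ → ℝ} (hc : 0 ≤ c) (hT : 0 ≤ T) (hcT : c * T ≤ π)
    (hf : ∀ u ∈ Icc 0 T, HasDerivAt f (f' u) u)
    (hf' : ∀ u ∈ Icc 0 T, HasDerivAt f' (-(K u) * f u) u)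
    (hK : ∀ u ∈ Icc 0 T, K u ≤ c ^ 2) (hf_nonneg : ∀ u ∈ Icc 0 T, 0 ≤ f u) (hf0 : f 0 = 0) :
    0 ≤ sinWronskian c f f' T := by
  have hW u (hu : u ∈ Icc 0 T) := hasDerivAt_sinWronskian (c := c) (hf u hu) (hf' u hu)
  have hmono : MonotoneOn (sinWronskian c f f') (Icc 0 T) :=
    monotoneOn_of_hasDerivWithinAt_nonneg (convex_Icc 0 T)
      (fun u hu => (hW u hu).continuousAt.continuousWithinAt)
      (fun u hu => (hW u (interior_subset hu)).hasDerivWithinAt)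
      (fun u hu => by
        have hu' := interior_subset hu
        have hsin : 0 ≤ sin (c * u) :=
          sin_nonneg_of_nonneg_of_le_pi (mul_nonneg hc hu'.1) (by nlinarith [hu'.2])
        exact mul_nonneg (sub_nonneg.2 (hK u hu')) (mul_nonneg (hf_nonneg u hu') hsin))
  have hW0 : sinWronskian c f f' 0 = 0 := by simp [sinWronskian, hf0]
  exact hW0 ▸ hmono (left_mem_Icc.2 hT) (right_mem_Icc.2 hT) hT

lemma sinWronskian_neg {c t : ℝ} {f f' : ℝ → ℝ} (hc : 0 < c) (ht : 0 < t) (hct : c * t < π / 2)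
    (hf't : f' t ≤ 0) (hft : 0 < f t) : sinWronskian c f f' t < 0 := by
  have hct0 : 0 < c * t := mul_pos hc ht
  have hsin : 0 < sin (c * t) := sin_pos_of_pos_of_lt_pi hct0 (by linarith [pi_pos])
  have hcos : 0 < cos (c * t) := cos_pos_of_mem_Ioo ⟨by linarith [pi_pos], hct⟩
  have := mul_nonpos_of_nonpos_of_nonneg hf't hsin.le
  have := mul_pos hft (mul_pos hc hcos)
  unfold sinWronskian
  linarith

theorem stmt_17_general (ℓ Kp : ℝ) (hKp : 0 < Kp) (K f f' : ℝ → ℝ)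
    (hK : ∀ t ∈ Icc 0 ℓ, K t ≤ Kp)
    (hf : ∀ t ∈ Icc 0 ℓ, HasDerivAt f (f' t) t)
    (hf' : ∀ t ∈ Icc 0 ℓ, HasDerivAt f' (-(K t) * f t) t)
    (hf0 : f 0 = 0) (hf'0 : 0 < f' 0) :
    ∀ t ∈ Icc 0 ℓ, t < Real.pi / (2 * Real.sqrt Kp) → 0 < f' t := by
  intro t ht htπ
  by_contra! hf't
  set c := √Kp
  have hc : 0 < c := sqrt_pos.2 hKp
  have hsub {s} (hs : s ≤ t) : Icc 0 s ⊆ Icc 0 ℓ := Icc_subset_Icc le_rfl (hs.trans ht.2)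
  obtain ⟨t₀, ⟨ht₀, ht₀t⟩, hf't₀, hpos⟩ := exists_first_nonpos_of_continuousOn ht.1
    (fun u hu => (hf' u (hsub le_rfl hu)).continuousAt.continuousWithinAt) hf'0 hf't
  have hD := hsub ht₀t
  have hfmono : StrictMonoOn f (Icc 0 t₀) :=
    strictMonoOn_of_hasDerivWithinAt_pos (convex_Icc 0 t₀)
      (fun u hu => (hf u (hD hu)).continuousAt.continuousWithinAt)
      (fun u hu => (hf u (hD (interior_subset hu))).hasDerivWithinAt)
      (fun u hu => hpos u (by rw [interior_Icc] at hu; exact ⟨hu.1.le, hu.2⟩))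
  have hf_nonneg (u) (hu : u ∈ Icc 0 t₀) : 0 ≤ f u :=
    hf0 ▸ hfmono.monotoneOn (left_mem_Icc.2 ht₀.le) hu hu.1
  have hft₀ : 0 < f t₀ := hf0 ▸ hfmono (left_mem_Icc.2 ht₀.le) (right_mem_Icc.2 ht₀.le) ht₀
  have hct₀ : c * t₀ < π / 2 :=
    calc c * t₀ ≤ c * t := by gcongr
      _ < c * (π / (2 * c)) := by gcongr
      _ = π / 2 := by field_simp
  have hW := sinWronskian_nonneg hc.le ht₀.le (by linarith [pi_pos])
    (fun u hu => hf u (hD hu)) (fun u hu => hf' u (hD hu))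
    (fun u hu => sq_sqrt hKp.le ▸ hK u (hD hu)) hf_nonneg hf0
  exact (sinWronskian_neg hc ht₀ hct₀ hf't₀ hft₀).not_ge hW

/-- Let `f` solve the scalar Jacobi equation `f'' + K f = 0` on `[0,ℓ]` with
`K ≤ K⁺`, `K⁺ > 0`, `f 0 = 0`, `f' 0 > 0`.  Then `f' t > 0` (so `f` is strictly
increasing) on `[0, π/(2√K⁺)) ∩ [0,ℓ]`. -/
theorem stmt_17 (ℓ Kp : ℝ) (hℓ : 0 ≤ ℓ) (hKp : 0 < Kp) (K f f' : ℝ → ℝ)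
    (hKcont : ContinuousOn K (Icc 0 ℓ))
    (hK : ∀ t ∈ Icc 0 ℓ, K t ≤ Kp)
    (hf : ∀ t ∈ Icc 0 ℓ, HasDerivAt f (f' t) t)
    (hf' : ∀ t ∈ Icc 0 ℓ, HasDerivAt f' (-(K t) * f t) t)
    (hf0 : f 0 = 0) (hf'0 : 0 < f' 0) :
    ∀ t ∈ Icc 0 ℓ, t < Real.pi / (2 * Real.sqrt Kp) → 0 < f' t :=
  stmt_17_general ℓ Kp hKp K f f' hK hf hf' hf0 hf'0
end

section
/- Let K : ℝ → ℝ be continuous and bounded, and suppose that for each n there is a solution U_n of the Riccati equation U' + U² + K = 0 defined on (t_n, ∞) with U_n(t) > 0 for all t > t_n, where t_n → -∞. Suppose moreover there is a uniform bound: for each a > 0 there is C > 0 with |U_n(t)| < C for all t ≥ t_n + a and all n. Then there exists a solution U of the Riccati equation defined on all of ℝ with U(t) ≥ 0 for all t ∈ ℝ. -/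
/-!
Two solutions of `u' = -u² - K` that agree at one time agree on their common interval of
existence, because the right-hand side is locally Lipschitz in `u`; by the intermediate value
theorem, solutions therefore never cross. Along a subsequence on which `Uₙ(0)` is monotone,
`Uₙ(t)` is then eventually monotone in `n` for every `t`, and it is bounded, so it converges to
some `V(t) ≥ 0`. Dominated convergence in `Uₙ(t) - Uₙ(s) = ∫ₛᵗ (-Uₙ² - K)` gives the same
identity for `V`, which makes `V` locally Lipschitz and then, by the fundamental theorem of
calculus, a solution on all of `ℝ`.
-/

open Filter Set MeasureTheory intervalIntegral
open scoped Topology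

def IsRiccatiSolOn (K u : ℝ → ℝ) (s : Set ℝ) : Prop :=
  ∀ t ∈ s, HasDerivAt u (-(u t) ^ 2 - K t) t

lemma lipschitzOnWith_neg_sq_sub (c C : ℝ) :
    LipschitzOnWith (2 * C).toNNReal (fun x : ℝ => -x ^ 2 - c) (Icc (-C) C) := by
  refine LipschitzOnWith.of_dist_le_mul fun x hx y hy => ?_
  have hx' : |x| ≤ C := abs_le.mpr hx
  have hy' : |y| ≤ C := abs_le.mpr hy
  rw [Real.dist_eq, Real.dist_eq, Real.coe_toNNReal _ (by linarith [abs_nonneg x]),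
    show -x ^ 2 - c - (-y ^ 2 - c) = -(x + y) * (x - y) by ring, abs_mul, abs_neg]
  gcongr
  calc |x + y| ≤ |x| + |y| := abs_add_le x y
    _ ≤ 2 * C := by linarith

lemma abs_neg_sq_sub_le {x c C : ℝ} (hx : |x| ≤ C) : |-x ^ 2 - c| ≤ C ^ 2 + |c| := by
  have hsq : x ^ 2 ≤ C ^ 2 := by
    rw [← sq_abs]; exact pow_le_pow_left₀ (abs_nonneg x) hx 2
  rw [abs_le]
  constructor <;> linarith [neg_abs_le c, le_abs_self c, sq_nonneg x]

lemma lipschitzOnWith_of_integral_eq {f V : ℝ → ℝ} {M a b : ℝ}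
    (hf : ∀ τ ∈ Icc a b, |f τ| ≤ M) (hV : ∀ s t, V t - V s = ∫ τ in s..t, f τ) :
    LipschitzOnWith M.toNNReal V (Icc a b) := by
  refine LipschitzOnWith.of_dist_le_mul fun x hx y hy => ?_
  rw [Real.dist_eq, Real.dist_eq, Real.coe_toNNReal _ ((abs_nonneg _).trans (hf x hx)), hV y x]
  simpa only [Real.norm_eq_abs] using norm_integral_le_of_norm_le_const (f := f) fun τ hτ =>
    (Real.norm_eq_abs _).trans_le (hf τ (uIcc_subset_Icc hy hx (uIoc_subset_uIcc hτ)))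

namespace IsRiccatiSolOn

variable {K u v : ℝ → ℝ} {s : Set ℝ}

lemma continuousOn (hu : IsRiccatiSolOn K u s) : ContinuousOn u s :=
  fun t ht => (hu t ht).continuousAt.continuousWithinAt

lemma mono {s' : Set ℝ} (hu : IsRiccatiSolOn K u s) (hs : s' ⊆ s) : IsRiccatiSolOn K u s' :=
  fun t ht => hu t (hs ht)

theorem eq_of_eq {a t₀ t : ℝ} (hu : IsRiccatiSolOn K u (Ioi a)) (hv : IsRiccatiSolOn K v (Ioi a))
    (ht₀ : a < t₀) (ht : a < t) (h : u t₀ = v t₀) : u t = v t := by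
  obtain ⟨a', b', ha', ht₀', ht'⟩ : ∃ a' b', a < a' ∧ t₀ ∈ Ioo a' b' ∧ t ∈ Ioo a' b' :=
    ⟨(a + min t₀ t) / 2, max t₀ t + 1, by grind⟩
  have hsub : Icc a' b' ⊆ Ioi a := fun τ hτ => ha'.trans_le hτ.1
  obtain ⟨Cu, hCu⟩ := isCompact_Icc.exists_bound_of_continuousOn (hu.continuousOn.mono hsub)
  obtain ⟨Cv, hCv⟩ := isCompact_Icc.exists_bound_of_continuousOn (hv.continuousOn.mono hsub)
  have hmem {w : ℝ → ℝ} (hw : IsRiccatiSolOn K w (Ioi a))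
      (hCw : ∀ τ ∈ Icc a' b', ‖w τ‖ ≤ max Cu Cv) (τ : ℝ) (hτ : τ ∈ Ioo a' b') :
      HasDerivAt w (-(w τ) ^ 2 - K τ) τ ∧ w τ ∈ Icc (-max Cu Cv) (max Cu Cv) :=
    ⟨hw τ (hsub (Ioo_subset_Icc_self hτ)), abs_le.mp (hCw τ (Ioo_subset_Icc_self hτ))⟩
  exact ODE_solution_unique_of_mem_Ioo (v := fun τ x => -x ^ 2 - K τ)
    (fun τ _ => lipschitzOnWith_neg_sq_sub (K τ) (max Cu Cv)) ht₀'
    (hmem hu fun τ hτ => (hCu τ hτ).trans (le_max_left _ _))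
    (hmem hv fun τ hτ => (hCv τ hτ).trans (le_max_right _ _)) h ht'

theorem le_of_le {a t₀ t : ℝ} (hu : IsRiccatiSolOn K u (Ioi a)) (hv : IsRiccatiSolOn K v (Ioi a))
    (ht₀ : a < t₀) (ht : a < t) (h : u t₀ ≤ v t₀) : u t ≤ v t := by
  by_contra! hlt
  have hsub : uIcc t₀ t ⊆ Ioi a := fun τ hτ => (lt_min ht₀ ht).trans_le hτ.1
  obtain ⟨τ, hτ, hτ0⟩ := intermediate_value_uIcc
    ((hu.continuousOn.mono hsub).sub (hv.continuousOn.mono hsub))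
    (mem_uIcc.mpr (Or.inl ⟨sub_nonpos.mpr h, sub_nonneg.mpr hlt.le⟩))
  exact hlt.ne' (hu.eq_of_eq hv (hsub hτ) ht (sub_eq_zero.mp hτ0))

end IsRiccatiSolOn

lemma exists_tendsto_of_monotoneOn_Ici {g : ℕ → ℝ} {N : ℕ} {C : ℝ}
    (hg : MonotoneOn g (Ici N) ∨ AntitoneOn g (Ici N)) (hC : ∀ k ≥ N, |g k| ≤ C) :
    ∃ L, Tendsto g atTop (𝓝 L) := by
  have hC' (k : ℕ) : |g (k + N)| ≤ C := hC _ (Nat.le_add_left N k)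
  suffices ∃ L, Tendsto (fun k => g (k + N)) atTop (𝓝 L) from
    this.imp fun L hL => (tendsto_add_atTop_iff_nat N).mp hL
  rcases hg with hg | hg
  · exact ⟨_, tendsto_atTop_ciSup (fun k l hkl => hg (by simp) (by simp) (by omega))
      ⟨C, forall_mem_range.mpr fun k => (abs_le.mp (hC' k)).2⟩⟩
  · exact ⟨_, tendsto_atTop_ciInf (fun k l hkl => hg (by simp) (by simp) (by omega))
      ⟨-C, forall_mem_range.mpr fun k => (abs_le.mp (hC' k)).1⟩⟩

section RiccatiFamily

variable {K : ℝ → ℝ} {u : ℕ → ℝ → ℝ} {a : ℕ → ℝ} {C : ℝ}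

theorem exists_tendsto_of_monotone_at_zero (ha : Tendsto a atTop atBot)
    (hu : ∀ k, IsRiccatiSolOn K (u k) (Ioi (a k))) (hC : ∀ k t, a k + 1 ≤ t → |u k t| ≤ C)
    (h0 : Monotone (u · 0) ∨ Antitone (u · 0)) (t : ℝ) :
    ∃ L, Tendsto (u · t) atTop (𝓝 L) := by
  obtain ⟨N, hN⟩ := eventually_atTop.mp (ha.eventually (eventually_le_atBot (min 0 t - 1)))
  have hsol (k : ℕ) (hk : k ∈ Ici N) : IsRiccatiSolOn K (u k) (Ioi (min 0 t - 1)) :=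
    (hu k).mono (Ioi_subset_Ioi (hN k hk))
  have hcomp {k l : ℕ} (hk : k ∈ Ici N) (hl : l ∈ Ici N) (h : u k 0 ≤ u l 0) : u k t ≤ u l t :=
    (hsol k hk).le_of_le (hsol l hl) (by grind) (by grind) h
  refine exists_tendsto_of_monotoneOn_Ici
    (h0.imp (fun h k hk l hl hkl => hcomp hk hl (h hkl)) fun h k hk l hl hkl => hcomp hl hk (h hkl))
    fun k hk => hC k t ?_
  linarith [hN k hk, min_le_right 0 t]

theorem integral_eq_of_tendsto (hK : Continuous K) {V : ℝ → ℝ} {s t : ℝ}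
    (hu : ∀ᶠ k in atTop, IsRiccatiSolOn K (u k) (uIcc s t))
    (hC : ∀ᶠ k in atTop, ∀ τ ∈ uIcc s t, |u k τ| ≤ C)
    (hV : ∀ τ, Tendsto (u · τ) atTop (𝓝 (V τ))) :
    V t - V s = ∫ τ in s..t, -(V τ) ^ 2 - K τ := by
  have hFTC : ∀ᶠ k in atTop, u k t - u k s = ∫ τ in s..t, -(u k τ) ^ 2 - K τ :=
    hu.mono fun k hk => (integral_eq_sub_of_hasDerivAt hk
      ((hk.continuousOn.pow 2).neg.sub hK.continuousOn).intervalIntegrable).symm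
  have hbound : ∀ᶠ k in atTop, ∀ᵐ τ, τ ∈ uIoc s t → ‖-(u k τ) ^ 2 - K τ‖ ≤ C ^ 2 + |K τ| := by
    filter_upwards [hC] with k hk
    exact ae_of_all _ fun τ hτ => abs_neg_sq_sub_le (hk τ (uIoc_subset_uIcc hτ))
  have hlim : Tendsto (fun k => ∫ τ in s..t, -(u k τ) ^ 2 - K τ) atTop
      (𝓝 (∫ τ in s..t, -(V τ) ^ 2 - K τ)) := by
    refine tendsto_integral_filter_of_dominated_convergence _ ?_ hbound
      ((continuous_const.add hK.abs).intervalIntegrable _ _)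
      (ae_of_all _ fun τ _ => ((hV τ).pow 2).neg.sub tendsto_const_nhds)
    filter_upwards [hu] with k hk
    exact (((hk.continuousOn.pow 2).neg.sub hK.continuousOn).mono
      uIoc_subset_uIcc).aestronglyMeasurable measurableSet_uIoc
  exact tendsto_nhds_unique (((hV t).sub (hV s)).congr' hFTC) hlim

theorem isRiccatiSolOn_univ_of_integral_eq (hK : Continuous K) {V : ℝ → ℝ} (hC : ∀ t, |V t| ≤ C)
    (hV : ∀ s t, V t - V s = ∫ τ in s..t, -(V τ) ^ 2 - K τ) : IsRiccatiSolOn K V univ := by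
  have hVc : Continuous V := continuous_iff_continuousAt.mpr fun x => by
    obtain ⟨B, hB⟩ :=
      (isCompact_Icc (a := x - 1) (b := x + 1)).exists_bound_of_continuousOn hK.continuousOn
    have hf (τ : ℝ) (hτ : τ ∈ Icc (x - 1) (x + 1)) : |-(V τ) ^ 2 - K τ| ≤ C ^ 2 + B :=
      (abs_neg_sq_sub_le (hC τ)).trans (add_le_add_right (hB τ hτ) _)
    exact (lipschitzOnWith_of_integral_eq hf hV).continuousOn.continuousAt
      (Icc_mem_nhds (by linarith) (by linarith))
  have hfc : Continuous fun τ => -(V τ) ^ 2 - K τ := ((hVc.pow 2).neg).sub hK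
  intro t _
  refine ((integral_hasDerivAt_right (hfc.intervalIntegrable 0 t)
    (hfc.stronglyMeasurableAtFilter _ _) hfc.continuousAt).const_add (V 0)).congr_of_eventuallyEq
    (Eventually.of_forall fun x => ?_)
  linarith [hV 0 x]

theorem isRiccatiSolOn_univ_of_tendsto (hK : Continuous K) (ha : Tendsto a atTop atBot)
    (hu : ∀ k, IsRiccatiSolOn K (u k) (Ioi (a k))) (hC : ∀ k t, a k + 1 ≤ t → |u k t| ≤ C)
    {V : ℝ → ℝ} (hV : ∀ t, Tendsto (u · t) atTop (𝓝 (V t))) : IsRiccatiSolOn K V univ := by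
  have hev (b : ℝ) : ∀ᶠ k in atTop, a k + 1 ≤ b :=
    (ha.eventually (eventually_le_atBot (b - 1))).mono fun k hk => by linarith
  refine isRiccatiSolOn_univ_of_integral_eq hK
    (fun t => le_of_tendsto (hV t).abs ((hev t).mono fun k hk => hC k t hk))
    fun s t => integral_eq_of_tendsto (C := C) hK ?_ ?_ hV
  · filter_upwards [hev (min s t)] with k hk
    exact (hu k).mono fun τ hτ => show a k < τ by linarith [hτ.1]
  · filter_upwards [hev (min s t)] with k hk τ hτ
    exact hC k τ (hk.trans hτ.1)

end RiccatiFamily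

theorem stmt_18_general (K : ℝ → ℝ) (hKc : Continuous K)
    (tseq : ℕ → ℝ) (htseq : Tendsto tseq atTop atBot)
    (U : ℕ → ℝ → ℝ)
    (hU : ∀ n, ∀ t, tseq n < t → HasDerivAt (U n) (-(U n t) ^ 2 - K t) t)
    (hUpos : ∀ n, ∀ t, tseq n < t → 0 < U n t)
    (hbound : ∀ a : ℝ, 0 < a → ∃ C : ℝ, 0 < C ∧
      ∀ n, ∀ t, tseq n + a ≤ t → |U n t| < C) :
    ∃ V : ℝ → ℝ, (∀ t, HasDerivAt V (-(V t) ^ 2 - K t) t) ∧ ∀ t, 0 ≤ V t := by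
  obtain ⟨C, -, hC⟩ := hbound 1 one_pos
  obtain ⟨σ, hσ⟩ := exists_increasing_or_nonincreasing_subseq (· ≤ ·) fun n => U n 0
  have ha : Tendsto (tseq ∘ σ) atTop atBot := htseq.comp σ.strictMono.tendsto_atTop
  have hsol (k : ℕ) : IsRiccatiSolOn K (U (σ k)) (Ioi (tseq (σ k))) := hU (σ k)
  have hbd (k : ℕ) (t : ℝ) (ht : tseq (σ k) + 1 ≤ t) : |U (σ k) t| ≤ C := (hC _ t ht).le
  have h0 : Monotone (fun k => U (σ k) 0) ∨ Antitone (fun k => U (σ k) 0) :=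
    hσ.imp (fun h => monotone_iff_forall_lt.mpr fun m n hmn => h m n hmn)
      fun h => antitone_iff_forall_lt.mpr fun m n hmn => (not_le.mp (h m n hmn)).le
  choose V hV using exists_tendsto_of_monotone_at_zero ha hsol hbd h0
  refine ⟨V, fun t => isRiccatiSolOn_univ_of_tendsto hKc ha hsol hbd hV t (mem_univ t),
    fun t => ge_of_tendsto (hV t) ?_⟩
  filter_upwards [ha.eventually (eventually_lt_atBot t)] with k hk
  exact (hUpos _ t hk).le

/-- Let `K : ℝ → ℝ` be continuous and bounded, and for each `n` let `Uₙ` solve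
the Riccati equation `U' + U² + K = 0` on `(tₙ, ∞)` with `Uₙ > 0` there, where
`tₙ → -∞`, and suppose the uniform bound: for each `a > 0` there is `C > 0` with
`|Uₙ t| < C` for all `n` and all `t ≥ tₙ + a`.  Then there is a solution `U` of
the Riccati equation on all of `ℝ` with `U ≥ 0`. -/
theorem stmt_18 (K : ℝ → ℝ) (hKc : Continuous K) (hKb : ∃ B, ∀ t, |K t| ≤ B)
    (tseq : ℕ → ℝ) (htseq : Tendsto tseq atTop atBot)
    (U : ℕ → ℝ → ℝ)
    (hU : ∀ n, ∀ t, tseq n < t → HasDerivAt (U n) (-(U n t) ^ 2 - K t) t)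
    (hUpos : ∀ n, ∀ t, tseq n < t → 0 < U n t)
    (hbound : ∀ a : ℝ, 0 < a → ∃ C : ℝ, 0 < C ∧
      ∀ n, ∀ t, tseq n + a ≤ t → |U n t| < C) :
    ∃ V : ℝ → ℝ, (∀ t, HasDerivAt V (-(V t) ^ 2 - K t) t) ∧ ∀ t, 0 ≤ V t :=
  stmt_18_general K hKc tseq htseq U hU hUpos hbound
end
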